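/- Let H be a connected linear k-uniform hypergraph on n vertices with no Berge-K_{2,t} (t ≥ 1). Fix a vertex u with degree d_u; denote by l_1,...,l_{d_u} the edges through u, B_u = V(H) \ (N_u ∪ {u}), and for each i let V_i ⊆ B_u be the set of vertices w ∈ B_u lying in some edge f with |f ∩ N_u| = 1 and f ∩ (l_i \ {u}) ≠ ∅. Then Σ_{i=1}^{d_u} |V_i| ≤ (t-1)(n - (k-1)d_u - 1). -/

import Mathlib

/-!
Count pairs `(l_i, w)` with `w ∈ V_i` by `w` instead of by `i`. If some `w ∈ B_u` lay in `V_i` for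
`t` indices `i`, pick for each of them an edge `f_i ∋ w` meeting `l_i ∖ {u}` in a vertex `c_i`.
Linearity makes the `c_i` distinct, `|f_i ∩ N_u| = 1` makes the `f_i` distinct, and `w ∉ N_u`
keeps the `f_i` apart from the `l_i`: this is a Berge-`K_{2,t}` with parts `{u, w}` and
`{c_1, …, c_t}`. So every `w ∈ B_u` is counted at most `t - 1` times.
-/

attribute [local instance] Classical.propDecidable

/-- The degree of a vertex. -/
def hDeg {V : Type*} [DecidableEq V] (E : Finset (Finset V)) (v : V) : ℕ :=
  (E.filter (fun e => v ∈ e)).card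

/-- The neighbourhood of `v`. -/
def hNbhd {V : Type*} [Fintype V] [DecidableEq V] (E : Finset (Finset V)) (v : V) :
    Finset V :=
  Finset.univ.filter (fun w => w ≠ v ∧ ∃ e ∈ E, v ∈ e ∧ w ∈ e)

/-- `H` contains no Berge-`K_{2,t}`: there do not exist distinct vertices
`a, b, c_1, …, c_t` and `2t` distinct hyperedges `f i ⊇ {a, c i}`,
`g i ⊇ {b, c i}`. -/
def BergeK2tFree {V : Type*} (E : Finset (Finset V)) (t : ℕ) : Prop :=
  ¬ ∃ (a b : V) (c : Fin t → V) (f g : Fin t → Finset V),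
      a ≠ b ∧ Function.Injective c ∧ (∀ i, c i ≠ a ∧ c i ≠ b) ∧
      (∀ i, f i ∈ E ∧ a ∈ f i ∧ c i ∈ f i) ∧
      (∀ i, g i ∈ E ∧ b ∈ g i ∧ c i ∈ g i) ∧
      Function.Injective f ∧ Function.Injective g ∧
      (∀ i j, f i ≠ g j)

open Finset

section Hypergraph

variable {V : Type*} {E : Finset (Finset V)}

theorem not_bergeK2tFree_of_injOn {ι : Type*} {s : Finset ι} {t : ℕ} (hts : t ≤ s.card)
    {a b : V} (c : ι → V) (f g : ι → Finset V) (hab : a ≠ b) (hc : Set.InjOn c s)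
    (hcab : ∀ i ∈ s, c i ≠ a ∧ c i ≠ b) (hf : ∀ i ∈ s, f i ∈ E ∧ a ∈ f i ∧ c i ∈ f i)
    (hg : ∀ i ∈ s, g i ∈ E ∧ b ∈ g i ∧ c i ∈ g i) (hfi : Set.InjOn f s) (hgi : Set.InjOn g s)
    (hfg : ∀ i ∈ s, ∀ j ∈ s, f i ≠ g j) : ¬ BergeK2tFree E t := by
  let e : Fin t ↪ s := (Fin.castLEEmb hts).trans s.equivFin.symm.toEmbedding
  exact not_not.mpr ⟨a, b, fun i => c (e i), fun i => f (e i), fun i => g (e i), hab,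
    fun i j h => e.injective (Subtype.ext (hc (e i).2 (e j).2 h)), fun i => hcab _ (e i).2,
    fun i => hf _ (e i).2, fun i => hg _ (e i).2,
    fun i j h => e.injective (Subtype.ext (hfi (e i).2 (e j).2 h)),
    fun i j h => e.injective (Subtype.ext (hgi (e i).2 (e j).2 h)),
    fun i j => hfg _ (e i).2 _ (e j).2⟩

variable [DecidableEq V]

theorem eq_of_pair_mem_of_linear (hlin : ∀ e ∈ E, ∀ f ∈ E, e ≠ f → (e ∩ f).card ≤ 1)
    {e f : Finset V} (he : e ∈ E) (hf : f ∈ E) {x y : V} (hxy : x ≠ y)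
    (hxe : x ∈ e) (hye : y ∈ e) (hxf : x ∈ f) (hyf : y ∈ f) : e = f := by
  by_contra hne
  have : 1 < (e ∩ f).card := one_lt_card.mpr ⟨x, by simp [hxe, hxf], y, by simp [hye, hyf], hxy⟩
  exact absurd (hlin e he f hf hne) (not_le.mpr this)

variable [Fintype V]

theorem mem_hNbhd {u v : V} : v ∈ hNbhd E u ↔ v ≠ u ∧ ∃ e ∈ E, u ∈ e ∧ v ∈ e := by
  simp [hNbhd]

theorem hNbhd_eq_biUnion (u : V) : hNbhd E u = (E.filter (u ∈ ·)).biUnion (·.erase u) := by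
  ext v
  simp only [mem_hNbhd, mem_biUnion, mem_filter, mem_erase]
  aesop

theorem card_hNbhd_add_hDeg {k : ℕ} (hunif : ∀ e ∈ E, e.card = k)
    (hlin : ∀ e ∈ E, ∀ f ∈ E, e ≠ f → (e ∩ f).card ≤ 1) (u : V) :
    (hNbhd E u).card + hDeg E u = k * hDeg E u := by
  have hdisj : (E.filter (u ∈ ·) : Set (Finset V)).PairwiseDisjoint (·.erase u) := by
    intro l hl l' hl' hne
    obtain ⟨hlE, hul⟩ := mem_filter.mp (mem_coe.mp hl)
    obtain ⟨hl'E, hul'⟩ := mem_filter.mp (mem_coe.mp hl')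
    refine disjoint_left.mpr fun v hv hv' => hne ?_
    exact eq_of_pair_mem_of_linear hlin hlE hl'E (mem_erase.mp hv).1.symm hul
      (mem_erase.mp hv).2 hul' (mem_erase.mp hv').2
  rw [hNbhd_eq_biUnion, card_biUnion hdisj, hDeg]
  calc _ = ∑ l ∈ E.filter (u ∈ ·), ((l.erase u).card + 1) := by
        rw [sum_add_distrib, sum_const, smul_eq_mul, mul_one]
    _ = ∑ _l ∈ E.filter (u ∈ ·), k := sum_congr rfl fun l hl => by
        rw [card_erase_add_one (mem_filter.mp hl).2, hunif l (mem_filter.mp hl).1]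
    _ = _ := by rw [sum_const, smul_eq_mul, mul_comm]

theorem card_compl_insert_hNbhd {k : ℕ} (hunif : ∀ e ∈ E, e.card = k)
    (hlin : ∀ e ∈ E, ∀ f ∈ E, e ≠ f → (e ∩ f).card ≤ 1) (u : V) :
    ((insert u (hNbhd E u))ᶜ.card : ℝ) = Fintype.card V - ((k : ℝ) - 1) * hDeg E u - 1 := by
  have hsplit := card_compl_add_card (insert u (hNbhd E u))
  rw [card_insert_of_notMem (by simp [mem_hNbhd])] at hsplit
  have hN : ((hNbhd E u).card : ℝ) + hDeg E u = k * hDeg E u := by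
    exact_mod_cast card_hNbhd_add_hDeg hunif hlin u
  have hsplit' : ((insert u (hNbhd E u))ᶜ.card : ℝ) + ((hNbhd E u).card + 1) = Fintype.card V := by
    exact_mod_cast hsplit
  linarith

/-- `w ∈ V_i` says `w ∈ B_u` and `Linked E u l_i w`. -/
def Linked (E : Finset (Finset V)) (u : V) (l : Finset V) (w : V) : Prop :=
  ∃ f ∈ E, (f ∩ hNbhd E u).card = 1 ∧ w ∈ f ∧ (f ∩ l.erase u).Nonempty

theorem card_filter_linked_lt {t : ℕ} (hlin : ∀ e ∈ E, ∀ f ∈ E, e ≠ f → (e ∩ f).card ≤ 1)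
    (hfree : BergeK2tFree E t) {u w : V} (hwN : w ∉ hNbhd E u) (hwu : w ≠ u) :
    ((E.filter (u ∈ ·)).filter (Linked E u · w)).card < t := by
  set S := (E.filter (u ∈ ·)).filter (Linked E u · w)
  by_contra! hts
  have hS : ∀ l ∈ S, (l ∈ E ∧ u ∈ l) ∧ Linked E u l w := fun l hl => by
    simpa only [S, mem_filter] using hl
  have : Nonempty V := ⟨u⟩
  choose! F hFE hFN hwF c hc using fun l hl => (hS l hl).2
  simp only [mem_inter, mem_erase] at hc
  have hcN : ∀ l ∈ S, c l ∈ hNbhd E u := fun l hl =>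
    mem_hNbhd.mpr ⟨(hc l hl).2.1, l, (hS l hl).1.1, (hS l hl).1.2, (hc l hl).2.2⟩
  have hc_inj : Set.InjOn c S := fun l hl l' hl' h =>
    eq_of_pair_mem_of_linear hlin (hS l hl).1.1 (hS l' hl').1.1 (hc l hl).2.1.symm
      (hS l hl).1.2 (hc l hl).2.2 (hS l' hl').1.2 (h ▸ (hc l' hl').2.2)
  -- `c l` is the unique vertex of `F l ∩ N_u`, so `F l` determines `c l`
  have hF_inj : Set.InjOn F S := fun l hl l' hl' h => by
    obtain ⟨x, hx⟩ := card_eq_one.mp (hFN l hl)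
    have h1 : c l ∈ F l ∩ hNbhd E u := mem_inter.mpr ⟨(hc l hl).1, hcN l hl⟩
    have h2 : c l' ∈ F l ∩ hNbhd E u := mem_inter.mpr ⟨h ▸ (hc l' hl').1, hcN l' hl'⟩
    rw [hx, mem_singleton] at h1 h2
    exact hc_inj hl hl' (h1.trans h2.symm)
  refine not_not.mpr hfree (not_bergeK2tFree_of_injOn hts c id F hwu.symm hc_inj
    (fun l hl => ⟨(hc l hl).2.1, fun h => hwN (h ▸ hcN l hl)⟩)
    (fun l hl => ⟨(hS l hl).1.1, (hS l hl).1.2, (hc l hl).2.2⟩)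
    (fun l hl => ⟨hFE l hl, hwF l hl, (hc l hl).1⟩) (Set.injOn_id _) hF_inj ?_)
  intro l hl l' hl' h
  have huF : u ∈ F l' := h ▸ (hS l hl).1.2
  exact hwN (mem_hNbhd.mpr ⟨hwu, F l', hFE l' hl', huF, hwF l' hl'⟩)

end Hypergraph

theorem sum_Vi_bound_general {V : Type*} [Fintype V] [DecidableEq V]
    (E : Finset (Finset V)) (k t : ℕ)
    (hunif : ∀ e ∈ E, e.card = k)
    (hlin : ∀ e ∈ E, ∀ f ∈ E, e ≠ f → (e ∩ f).card ≤ 1)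
    (hfree : BergeK2tFree E t) (u : V) :
    (∑ l ∈ E.filter (fun e => u ∈ e),
        ((Finset.univ.filter (fun w => w ∉ hNbhd E u ∧ w ≠ u ∧
            ∃ f ∈ E, (f ∩ hNbhd E u).card = 1 ∧ w ∈ f ∧
              (f ∩ (l.erase u)).Nonempty)).card : ℝ))
      ≤ ((t : ℝ) - 1) * ((Fintype.card V : ℝ) - ((k : ℝ) - 1) * (hDeg E u : ℝ) - 1) := by
  set B := (insert u (hNbhd E u))ᶜ
  have hB : ∀ w, w ∈ B ↔ w ∉ hNbhd E u ∧ w ≠ u := fun w => by simp [B, and_comm]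
  have hcount : ∀ w ∈ B, ((E.filter (u ∈ ·)).filter (Linked E u · w)).card ≤ (t : ℝ) - 1 :=
    fun w hw => by
      have := card_filter_linked_lt hlin hfree ((hB w).mp hw).1 ((hB w).mp hw).2
      rw [le_sub_iff_add_le]
      exact_mod_cast this
  calc _ = ∑ l ∈ E.filter (u ∈ ·), ((B.filter (Linked E u l ·)).card : ℝ) :=
        sum_congr rfl fun l _ => congrArg _ (congrArg _ (by
          ext w
          rw [mem_filter, mem_filter, hB, and_assoc]
          simp [Linked]))
    _ = ∑ w ∈ B, (((E.filter (u ∈ ·)).filter (Linked E u · w)).card : ℝ) := by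
        exact_mod_cast sum_card_bipartiteAbove_eq_sum_card_bipartiteBelow (Linked E u)
    _ ≤ ∑ _w ∈ B, ((t : ℝ) - 1) := sum_le_sum hcount
    _ = _ := by rw [sum_const, nsmul_eq_mul, card_compl_insert_hNbhd hunif hlin u, mul_comm]

/-- Claim 4.4: in a connected linear `k`-uniform Berge-`K_{2,t}`-free hypergraph on
`n` vertices, with `l_1, …, l_{d_u}` the edges through `u` and `V_i ⊆ B_u` the set of
vertices of `B_u = V ∖ (N_u ∪ {u})` lying in an edge `f` with `|f ∩ N_u| = 1` and
`f ∩ (l_i ∖ {u}) ≠ ∅`, we have `Σ_i |V_i| ≤ (t-1)(n - (k-1)d_u - 1)`. -/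
theorem sum_Vi_bound {V : Type*} [Fintype V] [DecidableEq V]
    (E : Finset (Finset V)) (k t : ℕ) (hk : 3 ≤ k) (ht : 1 ≤ t)
    (hunif : ∀ e ∈ E, e.card = k)
    (hlin : ∀ e ∈ E, ∀ f ∈ E, e ≠ f → (e ∩ f).card ≤ 1)
    (hconn : ∀ u v : V, Relation.ReflTransGen (fun a b => ∃ e ∈ E, a ∈ e ∧ b ∈ e) u v)
    (hfree : BergeK2tFree E t) (u : V) :
    (∑ l ∈ E.filter (fun e => u ∈ e),
        ((Finset.univ.filter (fun w => w ∉ hNbhd E u ∧ w ≠ u ∧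
            ∃ f ∈ E, (f ∩ hNbhd E u).card = 1 ∧ w ∈ f ∧
              (f ∩ (l.erase u)).Nonempty)).card : ℝ))
      ≤ ((t : ℝ) - 1) * ((Fintype.card V : ℝ) - ((k : ℝ) - 1) * (hDeg E u : ℝ) - 1) :=
  sum_Vi_bound_general E k t hunif hlin hfree u
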